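/- arXiv:1711.10652 — 3 statements merged into one kernel-verified Lean document; each statement's English description precedes it below -/
import Mathlib

section
/- For any online algorithm for the secretary problem under the expected capacity constraint of 1, if the algorithm selects only items that are the best seen so far starting from the first location i at which it may select, then the constraint ∑_{j=i}^n 1/j ≤ 1 forces i > n/e (asymptotically), and hence the probability of missing the globally best item is at least 1/e; equivalently the success probability is at most 1 − 1/e. -/
/-!
Telescoping `log ((j + 1) / j) ≤ 1 / j` over `j = i, …, n` gives `log ((n + 1) / i) ≤ ∑_{j=i}^n 1/j`,
so the capacity constraint forces `n + 1 ≤ e i`. Hence `i > n / e`, and the success probability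
`(n - i + 1) / n` is at most `1 - 1/e + 1/n`.
-/

open Finset Real Filter

lemma log_add_one_div_self_le {x : ℝ} (hx : 0 < x) : log ((x + 1) / x) ≤ 1 / x :=
  calc log ((x + 1) / x) ≤ (x + 1) / x - 1 := log_le_sub_one_of_pos (by positivity)
    _ = 1 / x := by field_simp; ring

lemma log_div_le_sum_Ico_one_div {i m : ℕ} (hi : 0 < i) (him : i ≤ m) :
    log ((m : ℝ) / i) ≤ ∑ j ∈ Ico i m, (1 : ℝ) / j := by
  induction m, him using Nat.le_induction with
  | base => simp [div_self (Nat.cast_pos.2 hi : (0 : ℝ) < i).ne']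
  | succ m him ih =>
    have hm : (0 : ℝ) < m := by exact_mod_cast hi.trans_le him
    have hlog : log (((m + 1 : ℕ) : ℝ) / i) = log ((m : ℝ) / i) + log ((m + 1) / m) := by
      rw [← log_mul (by positivity) (by positivity)]
      congr 1
      push_cast
      field_simp
    rw [sum_Ico_succ_top him, hlog]
    exact add_le_add ih (log_add_one_div_self_le hm)

lemma add_one_le_exp_one_mul_of_sum_Icc_one_div_le_one {i n : ℕ} (hi : 0 < i) (hin : i ≤ n + 1)
    (hcap : ∑ j ∈ Icc i n, (1 : ℝ) / j ≤ 1) : (n : ℝ) + 1 ≤ exp 1 * i := by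
  have hlog : log (((n + 1 : ℕ) : ℝ) / i) ≤ 1 := by
    rw [← Ico_add_one_right_eq_Icc] at hcap
    exact (log_div_le_sum_Ico_one_div hi hin).trans hcap
  have hi' : (0 : ℝ) < i := by exact_mod_cast hi
  rw [log_le_iff_le_exp (by positivity), div_le_iff₀ hi'] at hlog
  exact_mod_cast hlog

/-- Lower bound for the secretary problem under the expected capacity constraint of `1`:
if an algorithm starts selecting records from location `i` onwards, the expected-capacity
constraint `∑_{j=i}^n 1/j ≤ 1` forces `i > n/e`, and (asymptotically) the success
probability `(n - i + 1)/n` of catching the globally best item is at most `1 - 1/e`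
(equivalently, the probability of missing it is at least `1/e`). -/
theorem secretary_expected_capacity_lower_bound (ε : ℝ) (hε : 0 < ε) :
    ∃ N : ℕ, ∀ n i : ℕ, N ≤ n → 1 ≤ i → i ≤ n →
      (∑ j ∈ Finset.Icc i n, (1 : ℝ) / j) ≤ 1 →
      (n : ℝ) / Real.exp 1 < i ∧
      ((n : ℝ) - i + 1) / n ≤ 1 - 1 / Real.exp 1 + ε := by
  obtain ⟨N, hN⟩ := eventually_atTop.1 <|
    (tendsto_one_div_atTop_nhds_zero_nat.eventually (ge_mem_nhds hε)).and (eventually_gt_atTop 0)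
  refine ⟨N, fun n i hNn hi hin hcap => ?_⟩
  obtain ⟨hεn, hn⟩ := hN n hNn
  have hcap' := add_one_le_exp_one_mul_of_sum_Icc_one_div_le_one hi (hin.trans n.le_succ) hcap
  have hlt : (n : ℝ) / exp 1 < i := by
    rw [div_lt_iff₀ (exp_pos 1)]
    linarith
  refine ⟨hlt, ?_⟩
  calc ((n : ℝ) - i + 1) / n ≤ (n - n / exp 1 + 1) / n := by gcongr
    _ = 1 - 1 / exp 1 + 1 / n := by field_simp
    _ ≤ 1 - 1 / exp 1 + ε := by gcongr
end

section
/- If an LP-feasible solution has x(j) < 1 and x(j+1) > 0 for items with b(j) ≤ b(j+1) (i.e., v(j)/w(j) ≥ v(j+1)/w(j+1)), then the modified solution x'(j) = min(1, x(j) + x(j+1)·w(j+1)/w(j)), with x(j+1) decreased correspondingly so total weight is unchanged, has objective value at least as large. -/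
/-!
Raising `x₁` to `y` and lowering `x₂` by `(y - x₁) * w₁ / w₂` keeps the weight fixed and moves
weight `w₁ * (y - x₁) ≥ 0` from value density `v₂ / w₂` to the larger density `v₁ / w₁`.
-/

theorem weight_transfer_eq {w₁ w₂ x₁ x₂ y : ℝ} (hw₂ : w₂ ≠ 0) :
    w₁ * y + w₂ * (x₂ - (y - x₁) * w₁ / w₂) = w₁ * x₁ + w₂ * x₂ := by
  field_simp
  ring

theorem value_le_value_transfer {v₁ v₂ w₁ w₂ x₁ x₂ y : ℝ} (hw₁ : 0 < w₁)
    (hb : v₂ / w₂ ≤ v₁ / w₁) (hy : x₁ ≤ y) :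
    v₁ * x₁ + v₂ * x₂ ≤ v₁ * y + v₂ * (x₂ - (y - x₁) * w₁ / w₂) := by
  have hmoved : 0 ≤ w₁ * (y - x₁) := mul_nonneg hw₁.le (sub_nonneg.mpr hy)
  have hloss : v₂ * ((y - x₁) * w₁ / w₂) ≤ v₁ * (y - x₁) :=
    calc v₂ * ((y - x₁) * w₁ / w₂) = v₂ / w₂ * (w₁ * (y - x₁)) := by ring
      _ ≤ v₁ / w₁ * (w₁ * (y - x₁)) := mul_le_mul_of_nonneg_right hb hmoved
      _ = v₁ * (y - x₁) := by field_simp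
  linarith

theorem fractional_knapsack_exchange_general (v₁ v₂ w₁ w₂ x₁ x₂ : ℝ)
    (hw₁ : 0 < w₁) (hw₂ : 0 < w₂)
    (hx₁lt : x₁ < 1) (hx₂pos : 0 < x₂)
    (hb : v₂ / w₂ ≤ v₁ / w₁) :
    w₁ * min 1 (x₁ + x₂ * w₂ / w₁) +
        w₂ * (x₂ - (min 1 (x₁ + x₂ * w₂ / w₁) - x₁) * w₁ / w₂) =
      w₁ * x₁ + w₂ * x₂ ∧
    v₁ * x₁ + v₂ * x₂ ≤
      v₁ * min 1 (x₁ + x₂ * w₂ / w₁) +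
        v₂ * (x₂ - (min 1 (x₁ + x₂ * w₂ / w₁) - x₁) * w₁ / w₂) := by
  have hy : x₁ ≤ min 1 (x₁ + x₂ * w₂ / w₁) :=
    le_min hx₁lt.le (le_add_of_nonneg_right (by positivity))
  exact ⟨weight_transfer_eq hw₂.ne', value_le_value_transfer hw₁ hb hy⟩

/-- Exchange argument for the fractional knapsack LP: if `x j < 1` and `x (j+1) > 0` for
two items with `b j ≤ b (j+1)` (i.e. `v₂/w₂ ≤ v₁/w₁`), then transferring fractional mass
to item `j` via `x₁' = min 1 (x₁ + x₂ * w₂ / w₁)`, decreasing `x₂` so that the total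
weight is unchanged, does not decrease the objective value. -/
theorem fractional_knapsack_exchange (v₁ v₂ w₁ w₂ x₁ x₂ : ℝ)
    (hv₁ : 0 < v₁) (hv₂ : 0 < v₂) (hw₁ : 0 < w₁) (hw₂ : 0 < w₂)
    (hx₁ : 0 ≤ x₁) (hx₁lt : x₁ < 1) (hx₂pos : 0 < x₂) (hx₂le : x₂ ≤ 1)
    (hb : v₂ / w₂ ≤ v₁ / w₁) :
    w₁ * min 1 (x₁ + x₂ * w₂ / w₁) +
        w₂ * (x₂ - (min 1 (x₁ + x₂ * w₂ / w₁) - x₁) * w₁ / w₂) =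
      w₁ * x₁ + w₂ * x₂ ∧
    v₁ * x₁ + v₂ * x₂ ≤
      v₁ * min 1 (x₁ + x₂ * w₂ / w₁) +
        v₂ * (x₂ - (min 1 (x₁ + x₂ * w₂ / w₁) - x₁) * w₁ / w₂) :=
  fractional_knapsack_exchange_general v₁ v₂ w₁ w₂ x₁ x₂ hw₁ hw₂ hx₁lt hx₂pos hb
end

section
/- Greedy with augmented capacity: suppose all weights satisfy w(i) ≤ 1 and let 1 < C ≤ 2. Order items by non-decreasing buck-per-bang b(i) = w(i)/v(i), and let OFF select the maximal prefix of k items with ∑_{i=1}^k w(i) ≤ C (and ∑_{i=1}^{k+1} w(i) > C if k < n). Then the value of OFF satisfies ∑_{i=1}^k v(i) ≥ (C−1)·v₁(I), where v₁(I) is the optimal fractional knapsack value with capacity 1. -/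
/-!
Let `F` be the greedy prefix and `r = v k / w k` the value density of the first rejected item.
Sortedness gives `v i ≥ r * w i` on `F` and `v i ≤ r * w i` off `F`, so for every fractional
solution `y` we get `∑ v y - ∑_F v ≤ r * (∑ w y - ∑_F w)`. Since the rejected item weighs at most
`1`, the prefix weighs more than `C - 1`; hence every solution of capacity `C - 1` is worth at most
`∑_F v`. Scaling a capacity-`1` solution by `C - 1 ≤ 1` gives one of capacity `C - 1`.
-/

open Finset

section Threshold

variable {ι : Type*} [Fintype ι] [DecidableEq ι]

theorem sum_mul_le_sum_of_threshold (v w y : ι → ℝ) (F : Finset ι) {r : ℝ} (hr : 0 ≤ r)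
    (hin : ∀ i ∈ F, r * w i ≤ v i) (hout : ∀ i ∉ F, v i ≤ r * w i)
    (hy0 : ∀ i, 0 ≤ y i) (hy1 : ∀ i, y i ≤ 1) (hcap : ∑ i, w i * y i ≤ ∑ i ∈ F, w i) :
    ∑ i, v i * y i ≤ ∑ i ∈ F, v i := by
  have indicator (f : ι → ℝ) : ∑ i ∈ F, f i = ∑ i, if i ∈ F then f i else 0 := by
    rw [sum_ite_mem, univ_inter]
  have pointwise (i : ι) : v i * y i - (if i ∈ F then v i else 0) ≤
      r * (w i * y i - if i ∈ F then w i else 0) := by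
    by_cases hi : i ∈ F
    · simp only [hi, if_true]
      nlinarith [hin i hi, hy1 i]
    · simp only [hi, if_false, sub_zero]
      nlinarith [hout i hi, hy0 i]
  have hsum := sum_le_sum fun i (_ : i ∈ univ) => pointwise i
  rw [← mul_sum, sum_sub_distrib, sum_sub_distrib, ← indicator, ← indicator] at hsum
  linarith [mul_nonpos_of_nonneg_of_nonpos hr (sub_nonpos.mpr hcap)]

end Threshold

theorem div_mul_le_of_div_le_div {a b c d : ℝ} (hb : 0 < b) (hc : 0 < c) (hd : 0 < d)
    (h : a / b ≤ c / d) : d / c * a ≤ b := by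
  rw [div_le_div_iff₀ hb hd] at h
  rw [div_mul_eq_mul_div, div_le_iff₀ hc]
  linarith

theorem le_div_mul_of_div_le_div {a b c d : ℝ} (ha : 0 < a) (hb : 0 < b) (hd : 0 < d)
    (h : a / b ≤ c / d) : d ≤ b / a * c := by
  rw [div_le_div_iff₀ hb hd] at h
  rw [div_mul_eq_mul_div, le_div_iff₀ ha]
  linarith

section Prefix

variable {n : ℕ}

theorem Fin.sum_filter_lt_succ {M : Type*} [AddCommMonoid M] (f : Fin n → M) {k : ℕ}
    (hk : k < n) :
    ∑ i ∈ univ.filter (fun i : Fin n => (i : ℕ) < k + 1), f i =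
      ∑ i ∈ univ.filter (fun i : Fin n => (i : ℕ) < k), f i + f ⟨k, hk⟩ := by
  have hinsert : univ.filter (fun i : Fin n => (i : ℕ) < k + 1) =
      insert ⟨k, hk⟩ (univ.filter fun i : Fin n => (i : ℕ) < k) := by
    ext i
    simp only [mem_filter, mem_univ, true_and, mem_insert, Fin.ext_iff]
    omega
  rw [hinsert, sum_insert (by simp), add_comm]

theorem sum_mul_le_sum_prefix_of_sorted (v w y : Fin n → ℝ) (hv : ∀ i, 0 < v i)
    (hw : ∀ i, 0 < w i) (hsort : Monotone fun i => w i / v i) {k : ℕ} (hk : k < n)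
    (hy0 : ∀ i, 0 ≤ y i) (hy1 : ∀ i, y i ≤ 1)
    (hcap : ∑ i, w i * y i ≤ ∑ i ∈ univ.filter (fun i : Fin n => (i : ℕ) < k), w i) :
    ∑ i, v i * y i ≤ ∑ i ∈ univ.filter (fun i : Fin n => (i : ℕ) < k), v i := by
  set m : Fin n := ⟨k, hk⟩
  refine sum_mul_le_sum_of_threshold v w y _ (div_pos (hv m) (hw m)).le ?_ ?_ hy0 hy1 hcap
  · intro i hi
    refine div_mul_le_of_div_le_div (hv i) (hw m) (hv m) (hsort (Fin.le_def.mpr ?_))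
    simp only [mem_filter, mem_univ, true_and] at hi
    exact hi.le
  · intro i hi
    refine le_div_mul_of_div_le_div (hw m) (hv m) (hv i) (hsort (Fin.le_def.mpr ?_))
    simp only [mem_filter, mem_univ, true_and, not_lt] at hi
    exact hi

end Prefix

section FractionalKnapsack

variable {ι : Type*} [Fintype ι]

/-- The paper's `v_c(I)`. -/
noncomputable def fracKnapsackValue (v w : ι → ℝ) (c : ℝ) : ℝ :=
  sSup {s : ℝ | ∃ x : ι → ℝ, (∀ i, 0 ≤ x i ∧ x i ≤ 1) ∧ (∑ i, w i * x i ≤ c) ∧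
    s = ∑ i, v i * x i}

theorem mul_fracKnapsackValue_le (v w : ι → ℝ) {c t B : ℝ} (ht0 : 0 < t) (ht1 : t ≤ 1)
    (hB : 0 ≤ B)
    (h : ∀ y : ι → ℝ, (∀ i, 0 ≤ y i) → (∀ i, y i ≤ 1) → ∑ i, w i * y i ≤ t * c →
      ∑ i, v i * y i ≤ B) :
    t * fracKnapsackValue v w c ≤ B := by
  rw [← le_div_iff₀' ht0]
  refine Real.sSup_le ?_ (div_nonneg hB ht0.le)
  rintro s ⟨x, hx, hcap, rfl⟩
  have hscaled := h (fun i => t * x i) (fun i => mul_nonneg ht0.le (hx i).1)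
    (fun i => mul_le_one₀ ht1 (hx i).1 (hx i).2)
    (by simp only [mul_left_comm _ t, ← mul_sum]; exact mul_le_mul_of_nonneg_left hcap ht0.le)
  rw [le_div_iff₀' ht0, mul_sum]
  simpa only [mul_left_comm t] using hscaled

end FractionalKnapsack

theorem greedy_augmented_capacity_general (n : ℕ) (v w : Fin n → ℝ)
    (hv : ∀ i, 0 < v i) (hw : ∀ i, 0 < w i) (hw1 : ∀ i, w i ≤ 1)
    (hsort : ∀ i j : Fin n, i ≤ j → w i / v i ≤ w j / v j)
    (C : ℝ) (hC1 : 1 < C) (hC2 : C ≤ 2) (k : ℕ)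
    (hmax : k < n → C < ∑ i ∈ Finset.univ.filter (fun i : Fin n => (i : ℕ) < k + 1), w i) :
    (C - 1) *
        sSup {s : ℝ | ∃ x : Fin n → ℝ, (∀ i, 0 ≤ x i ∧ x i ≤ 1) ∧
          (∑ i, w i * x i ≤ 1) ∧ s = ∑ i, v i * x i} ≤
      ∑ i ∈ Finset.univ.filter (fun i : Fin n => (i : ℕ) < k), v i := by
  show (C - 1) * fracKnapsackValue v w 1 ≤ _
  refine mul_fracKnapsackValue_le v w (by linarith) (by linarith)
    (sum_nonneg fun i _ => (hv i).le) fun y hy0 hy1 hcap => ?_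
  by_cases hk : k < n
  · have hprefix : C - 1 < ∑ i ∈ univ.filter (fun i : Fin n => (i : ℕ) < k), w i := by
      have hnext := hmax hk
      rw [Fin.sum_filter_lt_succ w hk] at hnext
      linarith [hw1 ⟨k, hk⟩]
    exact sum_mul_le_sum_prefix_of_sorted v w y hv hw hsort hk hy0 hy1 (by linarith)
  · rw [filter_true_of_mem fun i _ => by omega]
    exact sum_le_sum fun i _ => mul_le_of_le_one_right (hv i).le (hy1 i)

/-- Greedy with augmented capacity: items (indexed in non-decreasing order of buck-per-bang
`w i / v i`) have values `v i > 0` and weights `0 < w i ≤ 1`; for `1 < C ≤ 2`, if `OFF`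
selects the maximal prefix of `k` items whose total weight is at most `C`, then its value
is at least `(C - 1)` times the optimal fractional knapsack value with capacity `1`. -/
theorem greedy_augmented_capacity (n : ℕ) (v w : Fin n → ℝ)
    (hv : ∀ i, 0 < v i) (hw : ∀ i, 0 < w i) (hw1 : ∀ i, w i ≤ 1)
    (hsort : ∀ i j : Fin n, i ≤ j → w i / v i ≤ w j / v j)
    (C : ℝ) (hC1 : 1 < C) (hC2 : C ≤ 2) (k : ℕ) (hk : k ≤ n)
    (hfit : ∑ i ∈ Finset.univ.filter (fun i : Fin n => (i : ℕ) < k), w i ≤ C)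
    (hmax : k < n → C < ∑ i ∈ Finset.univ.filter (fun i : Fin n => (i : ℕ) < k + 1), w i) :
    (C - 1) *
        sSup {s : ℝ | ∃ x : Fin n → ℝ, (∀ i, 0 ≤ x i ∧ x i ≤ 1) ∧
          (∑ i, w i * x i ≤ 1) ∧ s = ∑ i, v i * x i} ≤
      ∑ i ∈ Finset.univ.filter (fun i : Fin n => (i : ℕ) < k), v i :=
  greedy_augmented_capacity_general n v w hv hw hw1 hsort C hC1 hC2 k hmax
end
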